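/- Let (G,Ω) be an ample transitive ℓ-permutation group satisfying hypothesis (†), let Δ ∈ T and h ∈ Q_Δ with h > 1. (a) Suppose g ∈ rst(Δ) with g > 1 and supp(g) ⊆ (α, αh) for some α ∈ supp(h). Then: (i) [h⁻¹,h^g] ≠ 1; (ii) if f ∈ G and [[h⁻¹,h^g],f] = 1, then supp(g^{hᶦ})f = supp(g^{hᶦ}) for i = 0, 1, −1. (b) If β ∈ supp(h) and f ∈ G, then either βf = β or [[h⁻¹,h^g],f] ≠ 1 for some g ∈ rst(Δ) with g > 1. -/

import Mathlib

/-!  Common framework for ℓ-permutation groups on a totally ordered set. -/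

namespace LPerm

variable {Ω : Type*} [LinearOrder Ω]

/-- Pointwise join of two order automorphisms of a totally ordered set. -/
def autSup (f g : Ω ≃o Ω) : Ω ≃o Ω :=
  Equiv.toOrderIso
    { toFun := fun α => max (f α) (g α)
      invFun := fun α => min (f.symm α) (g.symm α)
      left_inv := by
        intro α
        dsimp only
        rcases le_total (f α) (g α) with h | h
        · rw [max_eq_right h]
          have h1 : α ≤ f.symm (g α) := by
            have := f.symm.monotone h
            simpa using this
          rw [g.symm_apply_apply, min_eq_right h1]
        · rw [max_eq_left h]
          have h1 : α ≤ g.symm (f α) := by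
            have := g.symm.monotone h
            simpa using this
          rw [f.symm_apply_apply, min_eq_left h1]
      right_inv := by
        intro α
        dsimp only
        rcases le_total (f.symm α) (g.symm α) with h | h
        · rw [min_eq_left h]
          have h1 : g (f.symm α) ≤ α := by
            have := g.monotone h
            simpa using this
          rw [f.apply_symm_apply, max_eq_left h1]
        · rw [min_eq_right h]
          have h1 : f (g.symm α) ≤ α := by
            have := f.monotone h
            simpa using this
          rw [g.apply_symm_apply, max_eq_right h1] }
    (f.monotone.max g.monotone)
    (f.symm.monotone.min g.symm.monotone)

/-- Pointwise meet of two order automorphisms of a totally ordered set. -/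
def autInf (f g : Ω ≃o Ω) : Ω ≃o Ω :=
  Equiv.toOrderIso
    { toFun := fun α => min (f α) (g α)
      invFun := fun α => max (f.symm α) (g.symm α)
      left_inv := by
        intro α
        dsimp only
        rcases le_total (f α) (g α) with h | h
        · rw [min_eq_left h]
          have h1 : g.symm (f α) ≤ α := by
            have := g.symm.monotone h
            simpa using this
          rw [f.symm_apply_apply, max_eq_left h1]
        · rw [min_eq_right h]
          have h1 : f.symm (g α) ≤ α := by
            have := f.symm.monotone h
            simpa using this
          rw [g.symm_apply_apply, max_eq_right h1]
      right_inv := by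
        intro α
        dsimp only
        rcases le_total (f.symm α) (g.symm α) with h | h
        · rw [max_eq_right h]
          have h1 : α ≤ f (g.symm α) := by
            have := f.monotone h
            simpa using this
          rw [g.apply_symm_apply, min_eq_right h1]
        · rw [max_eq_left h]
          have h1 : α ≤ g (f.symm α) := by
            have := g.monotone h
            simpa using this
          rw [f.apply_symm_apply, min_eq_left h1] }
    (f.monotone.min g.monotone)
    (f.symm.monotone.max g.symm.monotone)


/-- The pointwise order on order automorphisms: `f ≤ g` iff `f α ≤ g α` for all `α`. -/
def autLe (f g : Ω ≃o Ω) : Prop := ∀ α : Ω, f α ≤ g α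

/-- `|g| = g ∨ g⁻¹`. -/
def autAbs (g : Ω ≃o Ω) : Ω ≃o Ω := autSup g g⁻¹

/-- The support of an automorphism. -/
def supp (g : Ω ≃o Ω) : Set Ω := {α | g α ≠ α}

/-- Conjugation, written `h^g = g⁻¹ h g` in the paper. -/
def aconj (h g : Ω ≃o Ω) : Ω ≃o Ω := g⁻¹ * h * g

/-- The commutator `[a,b] = a⁻¹ b⁻¹ a b`. -/
def pcomm (a b : Ω ≃o Ω) : Ω ≃o Ω := a⁻¹ * b⁻¹ * a * b

/-- `G` is closed under the pointwise lattice operations, i.e. `(G,Ω)` is an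
ℓ-permutation group. -/
def SublatticeClosed (G : Subgroup (Ω ≃o Ω)) : Prop :=
  ∀ f g : Ω ≃o Ω, f ∈ G → g ∈ G → autSup f g ∈ G ∧ autInf f g ∈ G

/-- `(G,Ω)` is transitive. -/
def IsTransitive (G : Subgroup (Ω ≃o Ω)) : Prop :=
  ∀ α β : Ω, ∃ g ∈ G, g α = β

/-- `(G,Ω)` is o-2 transitive. -/
def IsO2Transitive (G : Subgroup (Ω ≃o Ω)) : Prop :=
  ∀ α₁ α₂ β₁ β₂ : Ω, α₁ < α₂ → β₁ < β₂ → ∃ g ∈ G, g α₁ = β₁ ∧ g α₂ = β₂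

/-- A convex `G`-congruence: an equivalence relation with convex classes which is
preserved by the action of `G`. -/
def IsConvexCongruence (G : Subgroup (Ω ≃o Ω)) (r : Ω → Ω → Prop) : Prop :=
  Equivalence r ∧ (∀ α β γ : Ω, r α γ → α ≤ β → β ≤ γ → r α β) ∧
    ∀ g ∈ G, ∀ α β : Ω, r α β → r (g α) (g β)

/-- `V(α,β)`: the intersection of all convex `G`-congruences under which `α` and `β`
are equivalent. -/
def Vcong (G : Subgroup (Ω ≃o Ω)) (α β : Ω) : Ω → Ω → Prop :=
  fun γ δ => ∀ r : Ω → Ω → Prop, IsConvexCongruence G r → r α β → r γ δ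

/-- Membership in the spine `𝔎` of `(G,Ω)`. -/
def SpineMem (G : Subgroup (Ω ≃o Ω)) (r : Ω → Ω → Prop) : Prop :=
  ∃ α β : Ω, α ≠ β ∧ r = Vcong G α β

/-- Inclusion of relations. -/
def relLe (r s : Ω → Ω → Prop) : Prop := ∀ x y : Ω, r x y → s x y

/-- `Δ ∈ T`: `Δ` is an o-block (class) of a member of the spine `𝔎`. -/
def InT (G : Subgroup (Ω ≃o Ω)) (Δ : Set Ω) : Prop :=
  ∃ r : Ω → Ω → Prop, SpineMem G r ∧ ∃ δ : Ω, Δ = {γ | r δ γ}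

/-- `Δ` is a class (o-block) of the relation `r`. -/
def IsBlockOf (r : Ω → Ω → Prop) (Δ : Set Ω) : Prop :=
  ∃ δ : Ω, Δ = {γ | r δ γ}

/-- The restricted stabiliser `rst(S) = {g ∈ G ∣ supp g ⊆ S}`. -/
def rst (G : Subgroup (Ω ≃o Ω)) (S : Set Ω) : Set (Ω ≃o Ω) :=
  {g | g ∈ G ∧ supp g ⊆ S}

/-- The (setwise) stabiliser `st(Δ) = {g ∈ G ∣ Δg = Δ}`. -/
def stab (G : Subgroup (Ω ≃o Ω)) (Δ : Set Ω) : Set (Ω ≃o Ω) :=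
  {g | g ∈ G ∧ g '' Δ = Δ}

/-- `Q_Δ = {h ∈ rst(Δ) ∣ ∃ α ∈ Δ, V(α, αh) = κ(Δ)}`; since `κ(Δ)` is the unique
convex congruence having `Δ` as a class, the condition `V(α,αh) = κ(Δ)` says exactly
that `Δ` is the class of `V(α, αh)` containing `α`. -/
def Qset (G : Subgroup (Ω ≃o Ω)) (Δ : Set Ω) : Set (Ω ≃o Ω) :=
  {h | h ∈ rst G Δ ∧ ∃ α ∈ Δ, Δ = {γ | Vcong G α (h α) α γ}}

/-- `(G,Ω)` is ample: `Q_Δ ≠ ∅` for every `Δ ∈ T`. -/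
def Ample (G : Subgroup (Ω ≃o Ω)) : Prop :=
  ∀ Δ : Set Ω, InT G Δ → (Qset G Δ).Nonempty

/-- `(G,Ω)` is abundant: for every `Δ ∈ T` and `g ∈ st(Δ)`, the automorphism
`dep(g,Δ)` agreeing with `g` on `Δ` and with the identity elsewhere lies in `G`. -/
def Abundant (G : Subgroup (Ω ≃o Ω)) : Prop :=
  ∀ Δ : Set Ω, InT G Δ → ∀ g ∈ stab G Δ,
    ∃ g₀ ∈ G, (∀ α ∈ Δ, g₀ α = g α) ∧ ∀ α ∉ Δ, g₀ α = α

/-- The spine `𝔎` has no minimal element. -/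
def SpineNoMin (G : Subgroup (Ω ≃o Ω)) : Prop :=
  ∀ r : Ω → Ω → Prop, SpineMem G r →
    ∃ r' : Ω → Ω → Prop, SpineMem G r' ∧ relLe r' r ∧ r' ≠ r

/-- `Δ` is a minimal element of `T`. -/
def MinimalInT (G : Subgroup (Ω ≃o Ω)) (Δ : Set Ω) : Prop :=
  InT G Δ ∧ ∀ Δ' : Set Ω, InT G Δ' → Δ' ⊆ Δ → Δ' = Δ

/-- Hypothesis (†): if `T` has a minimal element `Δ₀`, then every (nondegenerate
bounded) interval of `Δ₀` supports a non-trivial element of `G`. -/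
def Dagger (G : Subgroup (Ω ≃o Ω)) : Prop :=
  ∀ Δ₀ : Set Ω, MinimalInT G Δ₀ → ∀ α β : Ω, α ∈ Δ₀ → β ∈ Δ₀ → α < β →
    ∃ g : Ω ≃o Ω, g ∈ G ∧ g ≠ 1 ∧ supp g ⊆ Set.Ioo α β

/-- `X_h = {[h⁻¹, h^g] ∣ g ∈ G}`. -/
def Xset (G : Subgroup (Ω ≃o Ω)) (h : Ω ≃o Ω) : Set (Ω ≃o Ω) :=
  {x | ∃ g ∈ G, x = pcomm h⁻¹ (aconj h g)}

/-- `W_h = ⋃ {X_{h^g} ∣ g ∈ G, [X_h, X_{h^g}] ≠ 1}`. -/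
def Wset (G : Subgroup (Ω ≃o Ω)) (h : Ω ≃o Ω) : Set (Ω ≃o Ω) :=
  {x | ∃ g ∈ G, (∃ a ∈ Xset G h, ∃ b ∈ Xset G (aconj h g), pcomm a b ≠ 1) ∧
    x ∈ Xset G (aconj h g)}

/-- The centraliser of a subset `S` in `G`. -/
def cent (G : Subgroup (Ω ≃o Ω)) (S : Set (Ω ≃o Ω)) : Set (Ω ≃o Ω) :=
  {f | f ∈ G ∧ ∀ s ∈ S, s * f = f * s}

/-- The double centraliser of a subset `S` in `G`. -/
def cent2 (G : Subgroup (Ω ≃o Ω)) (S : Set (Ω ≃o Ω)) : Set (Ω ≃o Ω) :=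
  cent G (cent G S)

/-- The pointwise stabiliser in `G` of a subset `S ⊆ Ω`. -/
def ptStab (G : Subgroup (Ω ≃o Ω)) (S : Set Ω) : Set (Ω ≃o Ω) :=
  {f | f ∈ G ∧ ∀ α ∈ S, f α = α}

/-- The congruence covered by `K`: the union of all convex `G`-congruences properly
contained in `K`. -/
def coveredRel (G : Subgroup (Ω ≃o Ω)) (K : Ω → Ω → Prop) : Ω → Ω → Prop :=
  fun γ δ => ∃ r : Ω → Ω → Prop, IsConvexCongruence G r ∧ relLe r K ∧ r ≠ K ∧ r γ δ

/-- `Γ ∈ π(Δ)`, where `K = κ(Δ)`: `Γ` is a class of the congruence covered by `K`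
contained in `Δ`. -/
def InPi (G : Subgroup (Ω ≃o Ω)) (K : Ω → Ω → Prop) (Δ Γ : Set Ω) : Prop :=
  ∃ δ ∈ Δ, Γ = {γ | coveredRel G K δ γ}

/-- An irreducible element of `G`. -/
def IsIrreducibleElt (G : Subgroup (Ω ≃o Ω)) (g : Ω ≃o Ω) : Prop :=
  autLe 1 g ∧ g ≠ 1 ∧
    ∀ g₁ g₂ : Ω ≃o Ω, g₁ ∈ G → g₂ ∈ G → autSup g₁ g₂ = g → autInf g₁ g₂ = 1 →
      g₁ = 1 ∨ g₂ = 1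

/-- `(G,Ω)` is controlled. -/
def Controlled (G : Subgroup (Ω ≃o Ω)) : Prop :=
  ∀ Δ : Set Ω, InT G Δ → ¬ MinimalInT G Δ → ∀ g ∈ rst G Δ,
    (∃ δ ∈ Δ ∩ supp g, Δ = {γ | Vcong G δ (g δ) δ γ}) ∨
      ∃ Δ' : Set Ω, InT G Δ' ∧ supp g ⊆ Δ' ∧ Δ' ⊂ Δ


section AuxLemmas

variable {Ω : Type*} [LinearOrder Ω]

@[simp] lemma inv_apply_self' (f : Ω ≃o Ω) (x : Ω) : f⁻¹ (f x) = x := f.symm_apply_apply x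
@[simp] lemma apply_inv_self' (f : Ω ≃o Ω) (x : Ω) : f (f⁻¹ x) = x := f.apply_symm_apply x

lemma mul_apply' (f g : Ω ≃o Ω) (x : Ω) : (f * g) x = f (g x) := rfl
lemma one_apply' (x : Ω) : (1 : Ω ≃o Ω) x = x := rfl

lemma exists_moved {g : Ω ≃o Ω} (hg : g ≠ 1) : ∃ δ, g δ ≠ δ := by
  by_contra hc
  push_neg at hc
  exact hg (by ext δ; exact hc δ)

lemma eq_one_of_supp_empty {g : Ω ≃o Ω} (hg : ∀ δ, δ ∉ supp g) : g = 1 := by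
  ext δ
  exact not_not.mp (hg δ)

lemma supp_fix {g : Ω ≃o Ω} {δ : Ω} (h : δ ∉ supp g) : g δ = δ := not_not.mp h

lemma supp_inv_fix {g : Ω ≃o Ω} {δ : Ω} (h : δ ∉ supp g) : g⁻¹ δ = δ := by
  conv_lhs => rw [← supp_fix h]
  simp

lemma apply_mem_supp {g : Ω ≃o Ω} {δ : Ω} (h : δ ∈ supp g) : g δ ∈ supp g := by
  intro hc
  exact h (g.injective hc)

lemma inv_apply_mem_supp {g : Ω ≃o Ω} {δ : Ω} (h : δ ∈ supp g) : g⁻¹ δ ∈ supp g := by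
  intro hc
  rw [apply_inv_self'] at hc
  apply h
  conv_lhs => rw [hc]
  simp

lemma pos_lt {g : Ω ≃o Ω} (hg : autLe 1 g) {δ : Ω} (h : δ ∈ supp g) : δ < g δ :=
  lt_of_le_of_ne (hg δ) (Ne.symm h)

lemma pos_le {g : Ω ≃o Ω} (hg : autLe 1 g) (δ : Ω) : δ ≤ g δ := hg δ

lemma pos_inv_le {g : Ω ≃o Ω} (hg : autLe 1 g) (δ : Ω) : g⁻¹ δ ≤ δ := by
  have := hg (g⁻¹ δ)
  simpa using this

lemma pos_inv_lt {g : Ω ≃o Ω} (hg : autLe 1 g) {δ : Ω} (h : δ ∈ supp g) : g⁻¹ δ < δ := by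
  have h1 : g⁻¹ δ ∈ supp g := inv_apply_mem_supp h
  have h2 := pos_lt hg h1
  simpa using h2

lemma pcomm_eq_one_iff (a b : Ω ≃o Ω) : pcomm a b = 1 ↔ a * b = b * a := by
  unfold pcomm
  constructor
  · intro H
    have h1 := congrArg (fun z => b * a * z) H
    simpa [mul_assoc] using h1
  · intro H
    have h1 : a⁻¹ * b⁻¹ * (a * b) = a⁻¹ * b⁻¹ * (b * a) := by rw [H]
    calc a⁻¹ * b⁻¹ * a * b = a⁻¹ * b⁻¹ * (a * b) := by rw [mul_assoc]
    _ = a⁻¹ * b⁻¹ * (b * a) := h1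
    _ = 1 := by simp [mul_assoc]

lemma abs_apply (g : Ω ≃o Ω) (x : Ω) : autAbs g x = max (g x) (g⁻¹ x) := rfl

lemma abs_pos (g : Ω ≃o Ω) : autLe 1 (autAbs g) := by
  intro δ
  rw [abs_apply]
  rcases le_total δ (g δ) with h | h
  · exact le_max_of_le_left h
  · refine le_max_of_le_right ?_
    have := g.symm.monotone h
    show δ ≤ g.symm δ
    simpa using this

lemma supp_abs (g : Ω ≃o Ω) : supp (autAbs g) = supp g := by
  ext δ
  simp only [supp, Set.mem_setOf_eq, abs_apply]
  constructor
  · intro h hc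
    have h2 : g⁻¹ δ = δ := by conv_lhs => rw [← hc, inv_apply_self']
    rw [hc, h2] at h
    simp at h
  · intro h hc
    rcases lt_or_gt_of_ne h with h1 | h1
    · have h2 : δ < g⁻¹ δ := by
        have := g.symm.strictMono h1
        show δ < g.symm δ
        simpa using this
      have := le_max_right (g δ) (g⁻¹ δ)
      rw [hc] at this
      exact absurd this (not_le.mpr h2)
    · have := le_max_left (g δ) (g⁻¹ δ)
      rw [hc] at this
      exact absurd this (not_le.mpr h1)

lemma image_eq_of_subsets {f : Ω ≃o Ω} {S : Set Ω} (h1 : ∀ δ ∈ S, f δ ∈ S)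
    (h2 : ∀ δ ∈ S, f⁻¹ δ ∈ S) : f '' S = S := by
  apply Set.Subset.antisymm
  · rintro _ ⟨δ, hδ, rfl⟩
    exact h1 δ hδ
  · intro δ hδ
    exact ⟨f⁻¹ δ, h2 δ hδ, by simp⟩

end AuxLemmas
section CongLemmas

variable {Ω : Type*} [LinearOrder Ω] {G : Subgroup (Ω ≃o Ω)}

set_option linter.unusedSectionVars false

lemma isCC_vcong (G : Subgroup (Ω ≃o Ω)) (a b : Ω) : IsConvexCongruence G (Vcong G a b) := by
  refine ⟨⟨fun x r hr hab => hr.1.refl x,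
      fun hxy r hr hab => hr.1.symm (hxy r hr hab),
      fun hxy hyz r hr hab => hr.1.trans (hxy r hr hab) (hyz r hr hab)⟩,
    fun x y z hxz hxy hyz r hr hab => hr.2.1 x y z (hxz r hr hab) hxy hyz,
    fun g hg x y hxy r hr hab => hr.2.2 g hg x y (hxy r hr hab)⟩

lemma vcong_self (G : Subgroup (Ω ≃o Ω)) (a b : Ω) : Vcong G a b a b := fun _ _ hab => hab

lemma vcong_min {r : Ω → Ω → Prop} (hr : IsConvexCongruence G r) {a b : Ω} (hab : r a b) :
    relLe (Vcong G a b) r := fun _ _ hxy => hxy r hr hab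

lemma vcong_inv {a b : Ω} {g : Ω ≃o Ω} (hg : g ∈ G) {x y : Ω} (hxy : Vcong G a b x y) :
    Vcong G a b (g x) (g y) := fun r hr hab => hr.2.2 g hg x y (hxy r hr hab)

lemma isCC_eq (G : Subgroup (Ω ≃o Ω)) : IsConvexCongruence G (fun a b : Ω => a = b) :=
  ⟨⟨fun _ => rfl, Eq.symm, Eq.trans⟩,
    fun a b c hac hab hbc => le_antisymm hab (hac ▸ hbc),
    fun g _ a b hab => by rw [hab]⟩

lemma relLe_antisymm {r s : Ω → Ω → Prop} (h1 : relLe r s) (h2 : relLe s r) : r = s :=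
  funext fun x => funext fun y => propext ⟨h1 x y, h2 x y⟩

lemma spine_isCC {r : Ω → Ω → Prop} (hr : SpineMem G r) : IsConvexCongruence G r := by
  obtain ⟨a, b, hab, rfl⟩ := hr
  exact isCC_vcong G a b

lemma class_convex {r : Ω → Ω → Prop} (hr : IsConvexCongruence G r) {δ x y z : Ω}
    (hx : r δ x) (hy : r δ y) (hxz : x ≤ z) (hzy : z ≤ y) : r δ z := by
  have hxy : r x y := hr.1.trans (hr.1.symm hx) hy
  exact hr.1.trans hx (hr.2.1 x z y hxy hxz hzy)

lemma spine_class_two (htrans : IsTransitive G) {r : Ω → Ω → Prop} (hr : SpineMem G r)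
    (δ : Ω) : ∃ ε, ε ≠ δ ∧ r δ ε := by
  obtain ⟨a, b, hab, rfl⟩ := hr
  obtain ⟨g, hgG, hga⟩ := htrans a δ
  refine ⟨g b, fun hc => hab ?_, ?_⟩
  · exact g.injective (by rw [hc, hga])
  · have := vcong_inv (G := G) hgG (vcong_self G a b)
    rwa [hga] at this

lemma class_trick (htrans : IsTransitive G) {r s : Ω → Ω → Prop}
    (hr : IsConvexCongruence G r) (hs : IsConvexCongruence G s)
    {α x y : Ω} (hrx : r α x) (hsx : ¬ s α x) (hsy : s α y) (hry : ¬ r α y)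
    (h1 : x < α) (h2 : α < y) : False := by
  obtain ⟨g, hgG, hgα⟩ := htrans α y
  have hnsgx : ¬ s α (g x) := by
    intro hc
    apply hsx
    have h3 : s (g α) (g x) := hs.1.trans (hs.1.symm (hgα ▸ hsy)) hc
    have h4 := hs.2.2 g⁻¹ (G.inv_mem hgG) _ _ h3
    simpa using h4
  have hgxy : g x < y := hgα ▸ g.strictMono h1
  have hαgx : α < g x := by
    by_contra hle
    push_neg at hle
    have h5 : r (g α) (g x) := hr.2.2 g hgG α x hrx
    rw [hgα] at h5
    have h6 : r (g x) α := hr.2.1 (g x) α y (hr.1.symm h5) hle (le_of_lt h2)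
    exact hry (hr.1.trans (hr.1.symm h6) (hr.1.symm h5))
  exact hnsgx (hs.2.1 α (g x) y hsy (le_of_lt hαgx) (le_of_lt hgxy))

lemma class_comp (htrans : IsTransitive G) {r s : Ω → Ω → Prop}
    (hr : IsConvexCongruence G r) (hs : IsConvexCongruence G s) (α : Ω) :
    (∀ z, r α z → s α z) ∨ (∀ z, s α z → r α z) := by
  by_contra hc
  push_neg at hc
  obtain ⟨⟨x, hrx, hsx⟩, ⟨y, hsy, hry⟩⟩ := hc
  have hxα : x ≠ α := fun h => hsx (h ▸ hs.1.refl α)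
  have hyα : y ≠ α := fun h => hry (h ▸ hr.1.refl α)
  rcases hxα.lt_or_gt with h1 | h1 <;> rcases hyα.lt_or_gt with h2 | h2
  · rcases le_total x y with h3 | h3
    · exact hry (hr.1.trans hrx (hr.2.1 x y α (hr.1.symm hrx) h3 h2.le))
    · exact hsx (hs.1.trans hsy (hs.2.1 y x α (hs.1.symm hsy) h3 h1.le))
  · exact class_trick htrans hr hs hrx hsx hsy hry h1 h2
  · exact class_trick htrans hs hr hsy hry hrx hsx h2 h1
  · rcases le_total x y with h3 | h3
    · exact hsx (hs.2.1 α x y hsy h1.le h3)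
    · exact hry (hr.2.1 α y x hrx h2.le h3)

lemma spine_total (htrans : IsTransitive G) {K₁ K₂ : Ω → Ω → Prop}
    (h₁ : SpineMem G K₁) (h₂ : SpineMem G K₂) : relLe K₁ K₂ ∨ relLe K₂ K₁ := by
  by_contra hc
  push_neg at hc
  obtain ⟨h12, h21⟩ := hc
  simp only [relLe, not_forall] at h12 h21
  obtain ⟨x, y, hK1, hK2⟩ := h12
  obtain ⟨u, v, hK2uv, hK1uv⟩ := h21
  obtain ⟨g, hgG, hgu⟩ := htrans u x
  have hK2x : K₂ x (g v) := by
    have := (spine_isCC h₂).2.2 g hgG u v hK2uv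
    rwa [hgu] at this
  have hK1x : ¬ K₁ x (g v) := by
    intro hcc
    apply hK1uv
    have := (spine_isCC h₁).2.2 g⁻¹ (G.inv_mem hgG) _ _ hcc
    have hgx : g⁻¹ x = u := by rw [← hgu]; simp
    rw [hgx] at this
    simpa using this
  rcases class_comp htrans (spine_isCC h₁) (spine_isCC h₂) x with hcase | hcase
  · exact hK2 (hcase y hK1)
  · exact hK1x (hcase (g v) hK2x)

lemma min_class (htrans : IsTransitive G) {K₀ : Ω → Ω → Prop} (h₀ : SpineMem G K₀)
    (hmin : ∀ K', SpineMem G K' → relLe K' K₀ → K' = K₀) (δ : Ω) :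
    MinimalInT G {x | K₀ δ x} := by
  refine ⟨⟨K₀, h₀, δ, rfl⟩, ?_⟩
  rintro Δ' ⟨K', h's, δ', rfl⟩ hsub
  have hle : relLe K₀ K' := by
    rcases spine_total htrans h's h₀ with hx | hx
    · rw [hmin K' h's hx]
      exact fun x y H => H
    · exact hx
  have hδ' : K₀ δ δ' := hsub ((spine_isCC h's).1.refl δ')
  apply Set.Subset.antisymm hsub
  intro x hx
  exact hle _ _ ((spine_isCC h₀).1.trans ((spine_isCC h₀).1.symm hδ') hx)

lemma q_ne_one (htrans : IsTransitive G) {Δ : Set Ω} {K : Ω → Ω → Prop}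
    (hs : SpineMem G K) {δ : Ω} (hΔ : Δ = {x | K δ x})
    {h : Ω ≃o Ω} (hQ : h ∈ Qset G Δ) : h ≠ 1 := by
  rintro rfl
  obtain ⟨-, α, hαΔ, hEq⟩ := hQ
  obtain ⟨ε, hεne, hKδε⟩ := spine_class_two htrans hs δ
  have hδΔ : δ ∈ Δ := hΔ ▸ (spine_isCC hs).1.refl δ
  have hεΔ : ε ∈ Δ := hΔ ▸ hKδε
  rw [hEq] at hδΔ hεΔ
  have h1 : α = δ := hδΔ (fun a b => a = b) (isCC_eq G) rfl
  have h2 : α = ε := hεΔ (fun a b => a = b) (isCC_eq G) rfl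
  exact hεne (h2 ▸ h1 ▸ rfl)

end CongLemmas
section RfinLemmas

set_option linter.unusedSectionVars false

variable {Ω : Type*} [LinearOrder Ω] {G : Subgroup (Ω ≃o Ω)}

/-- The "finitely many points in between" relation. -/
def rfin : Ω → Ω → Prop := fun a b => (Set.Ioo (min a b) (max a b)).Finite

lemma rfin_of_le {a b : Ω} (hab : a ≤ b) (h : (Set.Ioo a b).Finite) : rfin a b := by
  unfold rfin
  rwa [min_eq_left hab, max_eq_right hab]

lemma rfin_finite {a b : Ω} (hab : a ≤ b) (h : rfin a b) : (Set.Ioo a b).Finite := by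
  unfold rfin at h
  rwa [min_eq_left hab, max_eq_right hab] at h

lemma isCC_rfin (G : Subgroup (Ω ≃o Ω)) : IsConvexCongruence G (rfin (Ω := Ω)) := by
  refine ⟨⟨fun x => by simp [rfin], fun {x y} h => by rwa [rfin, min_comm, max_comm],
      fun {x y z} hxy hyz => ?_⟩, fun a b c hac hab hbc => ?_, fun g hg a b hab => ?_⟩
  · refine Set.Finite.subset ((hxy.union hyz).union (Set.finite_singleton y)) ?_
    intro w hw
    simp only [Set.mem_Ioo, Set.mem_union, Set.mem_singleton_iff] at hw ⊢
    obtain ⟨h1, h2⟩ := hw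
    by_cases hwy : w = y
    · right; exact hwy
    left
    rcases lt_or_gt_of_ne hwy with h3 | h3
    · rcases min_lt_iff.mp h1 with h4 | h4
      · exact Or.inl ⟨min_lt_iff.mpr (Or.inl h4), lt_max_iff.mpr (Or.inr h3)⟩
      · exact Or.inr ⟨min_lt_iff.mpr (Or.inr h4), lt_max_iff.mpr (Or.inl h3)⟩
    · rcases lt_max_iff.mp h2 with h4 | h4
      · exact Or.inl ⟨min_lt_iff.mpr (Or.inr h3), lt_max_iff.mpr (Or.inl h4)⟩
      · exact Or.inr ⟨min_lt_iff.mpr (Or.inl h3), lt_max_iff.mpr (Or.inr h4)⟩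
  · have hac' : a ≤ c := le_trans hab hbc
    have h1 := rfin_finite hac' hac
    exact rfin_of_le hab (h1.subset (Set.Ioo_subset_Ioo_right hbc))
  · unfold rfin at hab ⊢
    rw [← g.monotone.map_min, ← g.monotone.map_max, ← OrderIso.image_Ioo]
    exact hab.image g

lemma cover_exists {a b : Ω} (hab : a < b) (hfin : (Set.Ioo a b).Finite) :
    ∃ c d : Ω, a ≤ c ∧ c < d ∧ d ≤ b ∧ Set.Ioo c d = ∅ := by
  rcases Set.eq_empty_or_nonempty (Set.Ioo a b) with he | hne
  · exact ⟨a, b, le_refl a, hab, le_refl b, he⟩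
  · obtain ⟨m, hm, hmax⟩ := Set.Finite.exists_maximalFor id _ hfin hne
    refine ⟨m, b, hm.1.le, hm.2, le_refl b, ?_⟩
    ext x
    simp only [Set.mem_Ioo, Set.mem_empty_iff_false, iff_false, not_and]
    intro h1 h2
    have hx : x ∈ Set.Ioo a b := ⟨lt_trans hm.1 h1, h2⟩
    exact absurd (hmax hx h1.le) (not_le.mpr h1)

end RfinLemmas
section LemmaA

set_option linter.unusedSectionVars false

variable {Ω : Type*} [LinearOrder Ω] {G : Subgroup (Ω ≃o Ω)}

/-- Under transitivity, ampleness and (†), every nonempty open interval supports a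
non-trivial element of `G`. -/
lemma small_support (htrans : IsTransitive G) (hample : Ample G) (hdag : Dagger G)
    {β γ : Ω} (hβγ : β < γ) :
    ∃ g : Ω ≃o Ω, g ∈ G ∧ g ≠ 1 ∧ supp g ⊆ Set.Ioo β γ := by
  classical
  set K : Ω → Ω → Prop := Vcong G β γ with hKdef
  have hKs : SpineMem G K := ⟨β, γ, ne_of_lt hβγ, rfl⟩
  have hKβγ : K β γ := vcong_self G β γ
  by_cases hmin : ∃ K₀ : Ω → Ω → Prop, SpineMem G K₀ ∧
      ∀ K', SpineMem G K' → relLe K' K₀ → K' = K₀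
  · -- Case A : the spine has a minimal element K₀
    obtain ⟨K₀, hK₀s, hK₀min⟩ := hmin
    have hK₀cc := spine_isCC hK₀s
    have hK₀K : relLe K₀ K := by
      rcases spine_total htrans hK₀s hKs with hx | hx
      · exact hx
      · rw [← hK₀min K hKs hx]
        exact fun x y H => H
    by_cases h2 : ∃ δ ε : Ω, K₀ δ ε ∧ β ≤ δ ∧ δ < ε ∧ ε ≤ γ
    · obtain ⟨δ, ε, hK₀δε, hβδ, hδε, hεγ⟩ := h2
      have hmc := min_class htrans hK₀s hK₀min δ
      obtain ⟨g, hgG, hg1, hgsupp⟩ :=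
        hdag _ hmc δ ε (hK₀cc.1.refl δ) hK₀δε hδε
      exact ⟨g, hgG, hg1, hgsupp.trans (Set.Ioo_subset_Ioo hβδ hεγ)⟩
    · -- no K₀-class has two points in [β,γ]; derive a contradiction
      exfalso
      push_neg at h2
      have hIoo : Set.Ioo β γ = ∅ := by
        by_contra hne
        obtain ⟨δ, hδ⟩ := Set.nonempty_iff_ne_empty.mpr hne
        obtain ⟨ε, hεne, hK₀δε⟩ := spine_class_two htrans hK₀s δ
        rcases lt_trichotomy ε β with hc | hc | hc
        · have hx : K₀ δ β := class_convex hK₀cc hK₀δε (hK₀cc.1.refl δ) hc.le hδ.1.le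
          exact absurd (h2 β δ (hK₀cc.1.symm hx) le_rfl hδ.1) (not_lt.mpr hδ.2.le)
        · exact absurd (h2 β δ (hK₀cc.1.symm (hc ▸ hK₀δε)) le_rfl hδ.1) (not_lt.mpr hδ.2.le)
        · rcases lt_trichotomy γ ε with hc2 | hc2 | hc2
          · have hx : K₀ δ γ := class_convex hK₀cc (hK₀cc.1.refl δ) hK₀δε hδ.2.le hc2.le
            exact lt_irrefl γ (h2 δ γ hx hδ.1.le hδ.2)
          · exact absurd (h2 δ ε hK₀δε hδ.1.le (hc2 ▸ hδ.2)) (not_lt.mpr hc2.ge)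
          · rcases lt_trichotomy δ ε with hc3 | hc3 | hc3
            · exact absurd (h2 δ ε hK₀δε hδ.1.le hc3) (not_lt.mpr hc2.le)
            · exact hεne hc3.symm
            · exact absurd (h2 ε δ (hK₀cc.1.symm hK₀δε) hc.le hc3) (not_lt.mpr hδ.2.le)
      -- second point of the K₀-class of β lies strictly below β
      obtain ⟨δ₀, hδ₀ne, hK₀βδ₀⟩ := spine_class_two htrans hK₀s β
      have hδ₀β : δ₀ < β := by
        rcases lt_trichotomy δ₀ β with hc | hc | hc
        · exact hc
        · exact absurd hc hδ₀ne
        · rcases lt_trichotomy δ₀ γ with hc2 | hc2 | hc2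
          · exact absurd ⟨hc, hc2⟩ (Set.eq_empty_iff_forall_notMem.mp hIoo δ₀)
          · exact absurd (h2 β δ₀ hK₀βδ₀ le_rfl hc) (not_lt.mpr hc2.le)
          · have hx : K₀ β γ := class_convex hK₀cc (hK₀cc.1.refl β) hK₀βδ₀ hβγ.le hc2.le
            exact absurd (h2 β γ hx le_rfl hβγ) (lt_irrefl γ)
      have hrfinβγ : rfin β γ := rfin_of_le hβγ.le (by rw [hIoo]; exact Set.finite_empty)
      have hKrfin : relLe K (rfin (Ω := Ω)) := vcong_min (isCC_rfin G) hrfinβγ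
      have hrfin : rfin β δ₀ := hKrfin _ _ (hK₀K _ _ hK₀βδ₀)
      have hfin : (Set.Ioo δ₀ β).Finite :=
        rfin_finite hδ₀β.le ((isCC_rfin G).1.symm hrfin)
      obtain ⟨c, d, hδ₀c, hcd, hdβ, hIoocd⟩ := cover_exists hδ₀β hfin
      have hK₀βc : K₀ β c :=
        class_convex hK₀cc hK₀βδ₀ (hK₀cc.1.refl β) hδ₀c (le_trans hcd.le hdβ)
      have hK₀βd : K₀ β d :=
        class_convex hK₀cc hK₀βδ₀ (hK₀cc.1.refl β) (le_trans hδ₀c hcd.le) hdβ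
      obtain ⟨g, hgG, hg1, hgsupp⟩ :=
        hdag _ (min_class htrans hK₀s hK₀min β) c d hK₀βc hK₀βd hcd
      apply hg1
      apply eq_one_of_supp_empty
      intro δ hδ
      have := hgsupp hδ
      rw [hIoocd] at this
      exact this
  · -- Case B : no minimal element in the spine
    push_neg at hmin
    have hnomin : ∀ K₀ : Ω → Ω → Prop, SpineMem G K₀ →
        ∃ K', SpineMem G K' ∧ relLe K' K₀ ∧ K' ≠ K₀ := by
      intro K₀ h₀
      obtain ⟨K', h's, hnot⟩ := hmin K₀ h₀
      exact ⟨K', h's, hnot⟩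
    have key : ∀ p q : Ω, p ≠ q → K p q →
        ∃ K', SpineMem G K' ∧ relLe K' K ∧ ¬ K' p q := by
      intro p q hpq hKpq
      set V : Ω → Ω → Prop := Vcong G p q with hVdef
      have hVs : SpineMem G V := ⟨p, q, hpq, rfl⟩
      have hVK : relLe V K := vcong_min (spine_isCC hKs) hKpq
      by_cases hVeqK : V = K
      · obtain ⟨K₁, h₁s, h₁le, h₁ne⟩ := hnomin K hKs
        refine ⟨K₁, h₁s, h₁le, fun hc => h₁ne ?_⟩
        have : relLe V K₁ := vcong_min (spine_isCC h₁s) hc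
        rw [hVeqK] at this
        exact relLe_antisymm h₁le this
      · obtain ⟨K₂, h₂s, h₂le, h₂ne⟩ := hnomin V hVs
        refine ⟨K₂, h₂s, fun x y H => hVK x y (h₂le x y H), fun hc => h₂ne ?_⟩
        exact relLe_antisymm h₂le (vcong_min (spine_isCC h₂s) hc)
    rcases Set.eq_empty_or_nonempty (Set.Ioo β γ) with hIoo | hne
    · -- empty interval : contradiction
      exfalso
      obtain ⟨K₁, h₁s, h₁le, h₁ne⟩ := hnomin K hKs
      have h₁cc := spine_isCC h₁s
      have hnK₁βγ : ¬ K₁ β γ := by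
        intro hc
        exact h₁ne (relLe_antisymm h₁le (vcong_min h₁cc hc))
      obtain ⟨δ₀, hδ₀ne, h₁βδ₀⟩ := spine_class_two htrans h₁s β
      have hδ₀β : δ₀ < β := by
        rcases lt_trichotomy δ₀ β with hc | hc | hc
        · exact hc
        · exact absurd hc hδ₀ne
        · rcases lt_trichotomy δ₀ γ with hc2 | hc2 | hc2
          · exact absurd ⟨hc, hc2⟩ (Set.eq_empty_iff_forall_notMem.mp hIoo δ₀)
          · exact absurd (hc2 ▸ h₁βδ₀) hnK₁βγ
          · exact absurd (class_convex h₁cc (h₁cc.1.refl β) h₁βδ₀ hβγ.le hc2.le) hnK₁βγ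
      have hrfinβγ : rfin β γ := rfin_of_le hβγ.le (by rw [hIoo]; exact Set.finite_empty)
      have hKrfin : relLe K (rfin (Ω := Ω)) := vcong_min (isCC_rfin G) hrfinβγ
      have hrfin : rfin β δ₀ := hKrfin _ _ (h₁le _ _ h₁βδ₀)
      have hfin : (Set.Ioo δ₀ β).Finite :=
        rfin_finite hδ₀β.le ((isCC_rfin G).1.symm hrfin)
      obtain ⟨c, d, hδ₀c, hcd, hdβ, hIoocd⟩ := cover_exists hδ₀β hfin
      have h₁βc : K₁ β c :=
        class_convex h₁cc h₁βδ₀ (h₁cc.1.refl β) hδ₀c (le_trans hcd.le hdβ)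
      have h₁βd : K₁ β d :=
        class_convex h₁cc h₁βδ₀ (h₁cc.1.refl β) (le_trans hδ₀c hcd.le) hdβ
      have h₁cd : K₁ c d := h₁cc.1.trans (h₁cc.1.symm h₁βc) h₁βd
      obtain ⟨g₁, hg₁G, hg₁β⟩ := htrans β c
      have hγ' : g₁ γ = d := by
        have hlt : c < g₁ γ := hg₁β ▸ g₁.strictMono hβγ
        have hIe : Set.Ioo c (g₁ γ) = ∅ := by
          rw [← hg₁β, ← OrderIso.image_Ioo, hIoo, Set.image_empty]
        rcases lt_trichotomy (g₁ γ) d with hc | hc | hc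
        · exact absurd (Set.eq_empty_iff_forall_notMem.mp hIoocd (g₁ γ) ⟨hlt, hc⟩) not_false
        · exact hc
        · exact absurd (Set.eq_empty_iff_forall_notMem.mp hIe d ⟨hcd, hc⟩) not_false
      have hKK₁ : relLe K K₁ := by
        intro x y hxy
        refine vcong_min h₁cc h₁cd x y ?_
        intro r hr hrcd
        apply hxy r hr
        have := hr.2.2 g₁⁻¹ (G.inv_mem hg₁G) c d hrcd
        have e1 : g₁⁻¹ c = β := by rw [← hg₁β]; simp
        have e2 : g₁⁻¹ d = γ := by rw [← hγ']; simp
        rwa [e1, e2] at this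
      exact h₁ne (relLe_antisymm h₁le hKK₁)
    · -- nonempty interval
      obtain ⟨δ, hδ⟩ := hne
      have hKcc := spine_isCC hKs
      have hKβδ : K β δ := hKcc.2.1 β δ γ hKβγ hδ.1.le hδ.2.le
      have hKδγ : K δ γ := hKcc.1.trans (hKcc.1.symm hKβδ) hKβγ
      obtain ⟨K', h's, h'le, h'nβδ⟩ := key β δ (ne_of_lt hδ.1) hKβδ
      obtain ⟨K'', h''s, h''le, h''nδγ⟩ := key δ γ (ne_of_lt hδ.2) hKδγ
      obtain ⟨Ks, hss, hnβδ, hnδγ⟩ :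
          ∃ Ks : Ω → Ω → Prop, SpineMem G Ks ∧ ¬ Ks β δ ∧ ¬ Ks δ γ := by
        rcases spine_total htrans h's h''s with hx | hx
        · exact ⟨K', h's, h'nβδ, fun hc => h''nδγ (hx _ _ hc)⟩
        · exact ⟨K'', h''s, fun hc => h'nβδ (hx _ _ hc), h''nδγ⟩
      have hscc := spine_isCC hss
      have hsub : {x | Ks δ x} ⊆ Set.Ioo β γ := by
        intro x hx
        constructor
        · by_contra hle
          push_neg at hle
          exact hnβδ (hscc.1.symm (class_convex hscc hx (hscc.1.refl δ) hle hδ.1.le))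
        · by_contra hle
          push_neg at hle
          exact hnδγ (class_convex hscc (hscc.1.refl δ) hx hδ.2.le hle)
      obtain ⟨hstar, hQ⟩ := hample {x | Ks δ x} ⟨Ks, hss, δ, rfl⟩
      exact ⟨hstar, hQ.1.1, q_ne_one htrans hss rfl hQ, hQ.1.2.trans hsub⟩

end LemmaA
section PartA

set_option linter.unusedSectionVars false

variable {Ω : Type*} [LinearOrder Ω]

lemma partA {h g : Ω ≃o Ω} (hhpos : autLe 1 h) (hgpos : autLe 1 g) (hg1 : g ≠ 1)
    {α : Ω} (hα : α ∈ supp h) (hsupp : supp g ⊆ Set.Ioo α (h α)) :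
    pcomm h⁻¹ (aconj h g) ≠ 1 ∧
      ∀ f : Ω ≃o Ω, pcomm (pcomm h⁻¹ (aconj h g)) f = 1 →
        f '' supp g = supp g ∧ f '' supp (aconj g h) = supp (aconj g h) ∧
          f '' supp (aconj g h⁻¹) = supp (aconj g h⁻¹) := by
  have hαlt : α < h α := lt_of_le_of_ne (hhpos α) (Ne.symm hα)
  set x := pcomm h⁻¹ (aconj h g) with hxdef
  have hxeq : x = h * (g⁻¹ * (h⁻¹ * (g * (h⁻¹ * (g⁻¹ * (h * g)))))) := by
    rw [hxdef]; unfold pcomm aconj; simp [mul_assoc]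
  have hxapp : ∀ δ, x δ = h (g⁻¹ (h⁻¹ (g (h⁻¹ (g⁻¹ (h (g δ))))))) := by
    intro δ; rw [hxeq]; rfl
  have notS_ge : ∀ {δ : Ω}, h α ≤ δ → δ ∉ supp g :=
    fun {δ} hle hδ => absurd (hsupp hδ).2 (not_lt.mpr hle)
  have notS_le : ∀ {δ : Ω}, δ ≤ α → δ ∉ supp g :=
    fun {δ} hle hδ => absurd (hsupp hδ).1 (not_lt.mpr hle)
  have hinvlt : ∀ {δ : Ω}, δ < h α → h⁻¹ δ < α := by
    intro δ hlt
    have := h.symm.strictMono hlt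
    show h.symm δ < α
    simpa using this
  -- the three support-case computations
  have caseS : ∀ δ, δ ∈ supp g → x δ = g (g δ) ∧ δ < x δ := by
    intro δ hδ
    have h1 : g δ ∈ supp g := apply_mem_supp hδ
    have h2 : h (g δ) ∉ supp g := notS_ge (h.strictMono (hsupp h1).1).le
    have h3 : g (g δ) ∈ supp g := apply_mem_supp h1
    have h4 : h⁻¹ (g (g δ)) ∉ supp g := notS_le (hinvlt (hsupp h3).2).le
    have he : x δ = g (g δ) := by
      rw [hxapp δ, supp_inv_fix h2, inv_apply_self', supp_inv_fix h4, apply_inv_self']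
    exact ⟨he, he ▸ lt_trans (pos_lt hgpos hδ) (pos_lt hgpos h1)⟩
  have caseP : ∀ δ, h⁻¹ δ ∈ supp g → x δ = h (g⁻¹ (h⁻¹ δ)) ∧ x δ < δ := by
    intro δ hδ'
    have hδgt : h α < δ := by
      have := h.strictMono (hsupp hδ').1
      simpa using this
    have h1 : δ ∉ supp g := notS_ge hδgt.le
    have h2 : h δ ∉ supp g := notS_ge (le_trans hδgt.le (hhpos δ))
    have he : x δ = h (g⁻¹ (h⁻¹ δ)) := by
      rw [hxapp δ, supp_fix h1, supp_inv_fix h2, inv_apply_self', supp_fix h1]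
    refine ⟨he, he ▸ ?_⟩
    have := h.strictMono (pos_inv_lt hgpos hδ')
    simpa using this
  have caseM : ∀ δ, h δ ∈ supp g → x δ = h⁻¹ (g⁻¹ (h δ)) ∧ x δ < δ := by
    intro δ hδ'
    have hδlt : δ < α := by
      have := h.symm.strictMono (hsupp hδ').2
      simpa using this
    have h1 : δ ∉ supp g := notS_le hδlt.le
    have h2 : g⁻¹ (h δ) ∈ supp g := inv_apply_mem_supp hδ'
    have h3 : h⁻¹ (g⁻¹ (h δ)) ∉ supp g := notS_le (hinvlt (hsupp h2).2).le
    have h4 : h⁻¹ (h⁻¹ (g⁻¹ (h δ))) ∉ supp g :=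
      notS_le (le_trans (pos_inv_le hhpos _) (hinvlt (hsupp h2).2).le)
    have he : x δ = h⁻¹ (g⁻¹ (h δ)) := by
      rw [hxapp δ, supp_fix h1, supp_fix h3, supp_inv_fix h4, apply_inv_self']
    refine ⟨he, he ▸ ?_⟩
    have := h.symm.strictMono (pos_inv_lt hgpos hδ')
    show h.symm (g⁻¹ (h δ)) < δ
    simpa using this
  have caseO : ∀ δ, δ ∉ supp g → h δ ∉ supp g → h⁻¹ δ ∉ supp g → x δ = δ := by
    intro δ h1 h2 h3
    rw [hxapp δ, supp_fix h1, supp_inv_fix h2, inv_apply_self', supp_fix h1,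
      supp_inv_fix h3, apply_inv_self']
  have hpos_iff : ∀ δ, δ < x δ ↔ δ ∈ supp g := by
    intro δ
    constructor
    · intro hlt
      by_contra h1
      by_cases h2 : h δ ∈ supp g
      · exact absurd hlt (not_lt.mpr (caseM δ h2).2.le)
      · by_cases h3 : h⁻¹ δ ∈ supp g
        · exact absurd hlt (not_lt.mpr (caseP δ h3).2.le)
        · rw [caseO δ h1 h2 h3] at hlt
          exact lt_irrefl δ hlt
    · exact fun hδ => (caseS δ hδ).2
  have hneg_iff : ∀ δ, x δ < δ ↔ (h δ ∈ supp g ∨ h⁻¹ δ ∈ supp g) := by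
    intro δ
    constructor
    · intro hlt
      by_contra hor
      push_neg at hor
      by_cases h1 : δ ∈ supp g
      · exact absurd hlt (not_lt.mpr (caseS δ h1).2.le)
      · rw [caseO δ h1 hor.1 hor.2] at hlt
        exact lt_irrefl δ hlt
    · rintro (hm | hp)
      · exact (caseM δ hm).2
      · exact (caseP δ hp).2
  obtain ⟨δ₀, hδ₀⟩ := exists_moved hg1
  have hδ₀S : δ₀ ∈ supp g := hδ₀
  constructor
  · intro hone
    have hlt := (caseS δ₀ hδ₀S).2
    rw [hone] at hlt
    exact lt_irrefl δ₀ hlt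
  · intro f hf
    have hcomm : x * f = f * x := (pcomm_eq_one_iff x f).mp hf
    have hcf : ∀ δ, x (f δ) = f (x δ) := fun δ =>
      congrArg (fun (F : Ω ≃o Ω) => F δ) hcomm
    have hcfinv : ∀ δ, x (f⁻¹ δ) = f⁻¹ (x δ) := by
      intro δ
      apply f.injective
      rw [← hcf (f⁻¹ δ), apply_inv_self', apply_inv_self']
    have hfS : ∀ δ ∈ supp g, f δ ∈ supp g := by
      intro δ hδ
      refine (hpos_iff (f δ)).mp ?_
      rw [hcf]
      exact f.strictMono ((hpos_iff δ).mpr hδ)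
    have hfinvS : ∀ δ ∈ supp g, f⁻¹ δ ∈ supp g := by
      intro δ hδ
      refine (hpos_iff (f⁻¹ δ)).mp ?_
      rw [hcfinv]
      exact f.symm.strictMono ((hpos_iff δ).mpr hδ)
    have hImS : f '' supp g = supp g := image_eq_of_subsets hfS hfinvS
    -- stability of the two side sets
    have sideP : ∀ (k : Ω ≃o Ω), (∀ δ ∈ supp g, k δ ∈ supp g) →
        (∀ δ, x (k δ) = k (x δ)) → ∀ δ, h⁻¹ δ ∈ supp g → h⁻¹ (k δ) ∈ supp g := by
      intro k hkS hck δ hδ'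
      have h1 : x (k δ) < k δ := by
        rw [hck]
        exact k.strictMono (caseP δ hδ').2
      rcases (hneg_iff (k δ)).mp h1 with hm | hp
      · exfalso
        have hkδlt : k δ < α := by
          have := (hsupp hm).2
          exact h.lt_iff_lt.mp this
        have h2 : α < k δ₀ := (hsupp (hkS δ₀ hδ₀S)).1
        have h3 : δ < δ₀ := k.lt_iff_lt.mp (lt_trans hkδlt h2)
        have h4 : h α < δ := by
          have := h.strictMono (hsupp hδ').1
          simpa using this
        exact absurd h3 (not_lt.mpr (lt_trans (hsupp hδ₀S).2 h4).le)
      · exact hp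
    have sideM : ∀ (k : Ω ≃o Ω), (∀ δ ∈ supp g, k δ ∈ supp g) →
        (∀ δ, x (k δ) = k (x δ)) → ∀ δ, h δ ∈ supp g → h (k δ) ∈ supp g := by
      intro k hkS hck δ hδ'
      have h1 : x (k δ) < k δ := by
        rw [hck]
        exact k.strictMono (caseM δ hδ').2
      rcases (hneg_iff (k δ)).mp h1 with hm | hp
      · exact hm
      · exfalso
        have hkδgt : h α < k δ := by
          have := (hsupp hp).1
          have h2 := h.strictMono this
          simpa using h2
        have h2 : k δ₀ < h α := (hsupp (hkS δ₀ hδ₀S)).2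
        have h3 : δ₀ < δ := k.lt_iff_lt.mp (lt_trans h2 hkδgt)
        have h4 : δ < α := by
          have := (hsupp hδ').2
          exact h.lt_iff_lt.mp this
        exact absurd h3 (not_lt.mpr (lt_trans h4 (hsupp hδ₀S).1).le)
    have hsm : supp (aconj g h) = {δ | h δ ∈ supp g} := by
      ext δ
      have heq : (aconj g h) δ = δ ↔ g (h δ) = h δ := by
        constructor
        · intro e
          have := congrArg h e
          simpa [aconj, mul_apply'] using this
        · intro e
          show h⁻¹ (g (h δ)) = δ
          rw [e]
          simp
      exact not_congr heq
    have hsp : supp (aconj g h⁻¹) = {δ | h⁻¹ δ ∈ supp g} := by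
      ext δ
      have haeq : aconj g h⁻¹ = h * (g * h⁻¹) := by
        unfold aconj
        rw [inv_inv, mul_assoc]
      have heq : (aconj g h⁻¹) δ = δ ↔ g (h⁻¹ δ) = h⁻¹ δ := by
        rw [haeq]
        constructor
        · intro e
          have := congrArg (fun z => h⁻¹ z) e
          simpa [mul_apply'] using this
        · intro e
          show h (g (h⁻¹ δ)) = δ
          rw [e]
          simp
      exact not_congr heq
    refine ⟨hImS, ?_, ?_⟩
    · rw [hsm]
      exact image_eq_of_subsets (fun δ hδ => sideM f hfS hcf δ hδ)
        (fun δ hδ => sideM f⁻¹ hfinvS hcfinv δ hδ)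
    · rw [hsp]
      exact image_eq_of_subsets (fun δ hδ => sideP f hfS hcf δ hδ)
        (fun δ hδ => sideP f⁻¹ hfinvS hcfinv δ hδ)

end PartA

/-- (Lemma 5.3 of the paper.) -/
theorem lemma_fifty {Ω : Type*} [LinearOrder Ω]
    (G : Subgroup (Ω ≃o Ω)) (hlat : SublatticeClosed G)
    (htrans : IsTransitive G) (hample : Ample G) (hdag : Dagger G)
    (Δ : Set Ω) (hΔ : InT G Δ) (h : Ω ≃o Ω) (hh : h ∈ Qset G Δ)
    (hpos : autLe 1 h ∧ h ≠ 1) :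
    (∀ g : Ω ≃o Ω, g ∈ rst G Δ → autLe 1 g → g ≠ 1 →
      (∃ α ∈ supp h, supp g ⊆ Set.Ioo α (h α)) →
        pcomm h⁻¹ (aconj h g) ≠ 1 ∧
        ∀ f ∈ G, pcomm (pcomm h⁻¹ (aconj h g)) f = 1 →
          f '' supp g = supp g ∧ f '' supp (aconj g h) = supp (aconj g h) ∧
            f '' supp (aconj g h⁻¹) = supp (aconj g h⁻¹)) ∧
    (∀ β ∈ supp h, ∀ f ∈ G, f β = β ∨
      ∃ g : Ω ≃o Ω, g ∈ rst G Δ ∧ autLe 1 g ∧ g ≠ 1 ∧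
        pcomm (pcomm h⁻¹ (aconj h g)) f ≠ 1) := by
  obtain ⟨hhrst, α₁, hα₁Δ, hΔeq⟩ := hh
  constructor
  · rintro g hgrst hgpos hgne ⟨α, hαs, hs⟩
    obtain ⟨hne1, himp⟩ := partA hpos.1 hgpos hgne hαs hs
    exact ⟨hne1, fun f _ hc => himp f hc⟩
  · intro β hβ f hfG
    by_cases hfβ : f β = β
    · exact Or.inl hfβ
    right
    have hβlt : β < h β := lt_of_le_of_ne (hpos.1 β) (Ne.symm hβ)
    have hβΔ : β ∈ Δ := hhrst.2 hβ
    have hhβΔ : h β ∈ Δ := hhrst.2 (apply_mem_supp hβ)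
    have hVcc := isCC_vcong G α₁ (h α₁)
    have hconv : Set.Ioo β (h β) ⊆ Δ := by
      intro z hz
      rw [hΔeq] at hβΔ hhβΔ ⊢
      simp only [Set.mem_setOf_eq] at hβΔ hhβΔ ⊢
      exact class_convex hVcc hβΔ hhβΔ hz.1.le hz.2.le
    rcases lt_or_gt_of_ne hfβ with hlt | hgt
    · -- f β < β : argue with f⁻¹
      have hfi : β < f⁻¹ β := by
        have := f.symm.strictMono hlt
        show β < f.symm β
        simpa using this
      set m := min (h β) (f⁻¹ β) with hm
      have hβm : β < m := lt_min hβlt hfi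
      obtain ⟨g₀, hg₀G, hg₀1, hg₀s⟩ := small_support htrans hample hdag hβm
      set g := autAbs g₀ with hg
      have hgG : g ∈ G := (hlat g₀ g₀⁻¹ hg₀G (G.inv_mem hg₀G)).1
      have hgs : supp g ⊆ Set.Ioo β m := by rw [hg, supp_abs]; exact hg₀s
      have hgpos : autLe 1 g := abs_pos g₀
      have hgne : g ≠ 1 := by
        intro hc
        apply hg₀1
        apply eq_one_of_supp_empty
        intro δ hδ
        have hmem : δ ∈ supp g := by rw [hg, supp_abs]; exact hδ
        rw [hc] at hmem
        exact hmem rfl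
      have hsm : supp g ⊆ Set.Ioo β (h β) :=
        hgs.trans (Set.Ioo_subset_Ioo le_rfl (min_le_left _ _))
      refine ⟨g, ⟨hgG, hsm.trans hconv⟩, hgpos, hgne, ?_⟩
      intro hc
      have himp := (partA hpos.1 hgpos hgne hβ hsm).2 f hc
      obtain ⟨δ₀, hδ₀⟩ := exists_moved hgne
      have hδ₀S : δ₀ ∈ supp g := hδ₀
      have hd : δ₀ ∈ f '' supp g := by rw [himp.1]; exact hδ₀S
      obtain ⟨y, hyS, hy⟩ := hd
      have hfy : f⁻¹ δ₀ ∈ supp g := by rw [← hy]; simpa using hyS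
      have h1 : f⁻¹ δ₀ < m := (hgs hfy).2
      have h2 : f⁻¹ β < f⁻¹ δ₀ := f.symm.strictMono (hgs hδ₀S).1
      exact absurd (lt_trans h2 h1) (not_lt.mpr (min_le_right _ _))
    · -- β < f β
      set m := min (h β) (f β) with hm
      have hβm : β < m := lt_min hβlt hgt
      obtain ⟨g₀, hg₀G, hg₀1, hg₀s⟩ := small_support htrans hample hdag hβm
      set g := autAbs g₀ with hg
      have hgG : g ∈ G := (hlat g₀ g₀⁻¹ hg₀G (G.inv_mem hg₀G)).1
      have hgs : supp g ⊆ Set.Ioo β m := by rw [hg, supp_abs]; exact hg₀s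
      have hgpos : autLe 1 g := abs_pos g₀
      have hgne : g ≠ 1 := by
        intro hc
        apply hg₀1
        apply eq_one_of_supp_empty
        intro δ hδ
        have hmem : δ ∈ supp g := by rw [hg, supp_abs]; exact hδ
        rw [hc] at hmem
        exact hmem rfl
      have hsm : supp g ⊆ Set.Ioo β (h β) :=
        hgs.trans (Set.Ioo_subset_Ioo le_rfl (min_le_left _ _))
      refine ⟨g, ⟨hgG, hsm.trans hconv⟩, hgpos, hgne, ?_⟩
      intro hc
      have himp := (partA hpos.1 hgpos hgne hβ hsm).2 f hc
      obtain ⟨δ₀, hδ₀⟩ := exists_moved hgne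
      have hδ₀S : δ₀ ∈ supp g := hδ₀
      have hfδ₀ : f δ₀ ∈ supp g := by rw [← himp.1]; exact ⟨δ₀, hδ₀S, rfl⟩
      have h1 : f δ₀ < m := (hgs hfδ₀).2
      have h2 : f β < f δ₀ := f.strictMono (hgs hδ₀S).1
      exact absurd (lt_trans h2 h1) (not_lt.mpr (min_le_right _ _))

end LPerm
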